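/- arXiv:2411.15663 — 2 statements merged into one kernel-verified Lean document; each statement's English description precedes it below -/
import Mathlib

section
/- Let n be an odd positive integer and let D_{2n} = ⟨r, s | r^n = s^2 = 1, srs = r^{-1}⟩ be the dihedral group of order 2n. With C_2 = ⟨s⟩ and C_n = ⟨r⟩, there is an isomorphism of ℚ[D_{2n}]-modules ℚ[D_{2n}/1] ⊕ ℚ[D_{2n}/D_{2n}]^{⊕2} ≅ ℚ[D_{2n}/C_n] ⊕ ℚ[D_{2n}/C_2]^{⊕2}, where ℚ[G/H] denotes the permutation module on the coset space G/H. -/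
/-!
Send the basis vector `g ∈ G/1` to `g • ([1], [1], [r] - [r⁻¹])` and the basis vectors of the two
copies of `G/G` to the sums of all cosets in `G/⟨r⟩` and in the second copy of `G/⟨s⟩`. This
`ℚ`-linear map is `G`-equivariant by construction, and both sides have dimension `2n + 2`, so it
suffices to show that it is injective. Write an element of the kernel as `(F, μ, ν)` with
`F : G → ℚ`. The coordinates in the first copy of `G/⟨s⟩` say `F (x s) = -F x`; with
`s r⁻¹ = r s` the coordinates in the second copy then say `2 (F (x r⁻¹) - F (x r)) + ν = 0`.
Summing over `x` gives `ν = 0`, so `F` is invariant under right multiplication by `r²`, hence by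
`r` because `n` is odd. The coordinates in `G/⟨r⟩` finally read `n F x + μ = 0` at `x` and
`-n F x + μ = 0` at `x s`.
-/

open Finsupp Finset

-- `g • v` is `mapDomain (g • ·) v`, the permutation action of the statement.
attribute [local instance] Finsupp.comapSMul Finsupp.comapMulAction Finsupp.comapDistribMulAction

theorem Finsupp.linearCombination_comapSMul {R G α β : Type*} [Semiring R] [Monoid G]
    [MulAction G α] [MulAction G β] {f : α → β →₀ R} (hf : ∀ (g : G) a, f (g • a) = g • f a)
    (g : G) (v : α →₀ R) :
    linearCombination R f (g • v) = g • linearCombination R f v := by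
  induction v using Finsupp.induction_linear with
  | zero => simp
  | add v w hv hw => rw [smul_add, map_add, hv, hw, map_add, smul_add]
  | single a c => simp [hf, comapSMul_def, mapDomain_smul]

theorem Finsupp.comapSMul_sum_single_comp {R G α β : Type*} [Semiring R] [Group G]
    [MulAction G α] [MulAction G β] [Fintype α] (ι : α → β)
    (hι : ∀ (g : G) a, ι (g • a) = g • ι a) (g : G) (c : R) :
    g • ∑ a, single (ι a) c = ∑ a, single (ι a) c := by
  simp only [Finset.smul_sum, comapSMul_single, ← hι]
  exact Equiv.sum_comp (MulAction.toPerm g) (fun a => single (ι a) c)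

open scoped Classical in
theorem sum_filter_mk_eq_zpowers {G M : Type*} [Group G] [Fintype G] [AddCommMonoid M]
    (a x : G) (F : G → M) :
    ∑ g with (QuotientGroup.mk g : G ⧸ Subgroup.zpowers a) = QuotientGroup.mk x, F g =
      ∑ i ∈ range (orderOf a), F (x * a ^ i) := by
  have hfilter : ({g | (QuotientGroup.mk g : G ⧸ Subgroup.zpowers a) = QuotientGroup.mk x} :
      Finset G) = (range (orderOf a)).image (x * a ^ ·) := by
    ext g
    rw [mem_filter, eq_comm, QuotientGroup.eq, mem_zpowers_iff_mem_range_orderOf]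
    simp only [mem_univ, true_and, mem_image, eq_inv_mul_iff_mul_eq]
  rw [hfilter, sum_image]
  intro i hi j hj hij
  exact pow_injOn_Iio_orderOf (by simpa using hi) (by simpa using hj) (mul_left_cancel hij)

section RightInvariance

variable {G α : Type*} [Monoid G] {r : G} {F : G → α}

theorem apply_mul_pow_eq (h : ∀ x, F (x * r) = F x) (x : G) (i : ℕ) : F (x * r ^ i) = F x := by
  induction i with
  | zero => simp
  | succ i ih => rw [pow_succ, ← mul_assoc, h, ih]

theorem apply_mul_eq_of_apply_mul_sq_eq (hr : Odd (orderOf r)) (h : ∀ x, F (x * r ^ 2) = F x)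
    (x : G) : F (x * r) = F x := by
  obtain ⟨k, hk⟩ := hr
  have hr : r = (r ^ 2) ^ (k + 1) := by
    rw [← pow_mul, show 2 * (k + 1) = orderOf r + 1 by omega, pow_succ, pow_orderOf_eq_one,
      one_mul]
  rw [hr, apply_mul_pow_eq h]

end RightInvariance

theorem eq_zero_of_forall_apply_mul_inv_sub_apply_mul_eq {G K : Type*} [Group G] [Fintype G]
    [DivisionRing K] [CharZero K] {F : G → K} {a : G} {d : K}
    (h : ∀ x, F (x * a⁻¹) - F (x * a) = d) : d = 0 := by
  have hshift (b : G) : ∑ x, F (x * b) = ∑ x, F x :=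
    Fintype.sum_equiv (Equiv.mulRight b) _ _ fun _ => rfl
  have hsum := Finset.sum_congr rfl fun x (_ : x ∈ univ) => h x
  rw [sum_sub_distrib, hshift, hshift, sub_self, sum_const, card_univ, nsmul_eq_mul] at hsum
  exact (mul_eq_zero.mp hsum.symm).resolve_left (by exact_mod_cast Fintype.card_ne_zero)

theorem eq_zero_of_brauer_equations {G : Type*} [Group G] [Fintype G] {r s : G}
    (hs : orderOf s = 2) (hsr : s * r * s = r⁻¹) (hr : Odd (orderOf r)) {F : G → ℚ} {μ ν : ℚ}
    (hX : ∀ x, ∑ i ∈ range (orderOf r), F (x * r ^ i) + μ = 0)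
    (hY : ∀ x, ∑ i ∈ range (orderOf s), F (x * s ^ i) = 0)
    (hZ : ∀ x, ∑ i ∈ range (orderOf s), (F (x * s ^ i * r⁻¹) - F (x * s ^ i * r)) + ν = 0) :
    F = 0 ∧ μ = 0 ∧ ν = 0 := by
  have hs2 : s * s = 1 := by rw [← sq, ← hs, pow_orderOf_eq_one]
  have hsr₁ (x : G) : x * s * r⁻¹ = x * r * s := by
    rw [← hsr]; simp only [mul_assoc, ← mul_assoc s s, hs2, one_mul]
  have hsr₂ (x : G) : x * s * r = x * r⁻¹ * s := by
    rw [← hsr]; simp only [mul_assoc, hs2, mul_one]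
  have hFs (x : G) : F (x * s) = -F x := by
    have := hY x
    simp only [hs, sum_range_succ, range_one, sum_singleton, pow_zero, pow_one, mul_one] at this
    linarith
  have hZ' (x : G) : F (x * r⁻¹) - F (x * r) = -ν / 2 := by
    have := hZ x
    simp only [hs, sum_range_succ, range_one, sum_singleton, pow_zero, pow_one, mul_one,
      hsr₁, hsr₂, hFs] at this
    linarith
  have hν : ν = 0 := by linarith [eq_zero_of_forall_apply_mul_inv_sub_apply_mul_eq hZ']
  have hFr : ∀ x, F (x * r) = F x := apply_mul_eq_of_apply_mul_sq_eq hr fun x => by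
    have := hZ' (x * r)
    rw [hν, mul_inv_cancel_right, mul_assoc, ← sq] at this
    linarith
  have hX' (x : G) : orderOf r * F x + μ = 0 := by
    simpa [apply_mul_pow_eq hFr] using hX x
  have hF (x : G) : F x = 0 := by
    have h₁ := hX' x
    have h₂ := hX' (x * s)
    rw [hFs] at h₂
    have hn : (orderOf r : ℚ) ≠ 0 := by exact_mod_cast (orderOf_pos r).ne'
    exact (mul_eq_zero.mp (by linarith : (orderOf r : ℚ) * F x = 0)).resolve_left hn
  refine ⟨funext hF, ?_, hν⟩
  simpa [hF] using hX' 1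

section BrauerRelation

abbrev BrauerLHS (G : Type*) [Group G] :=
  (G ⧸ (⊥ : Subgroup G)) ⊕ ((G ⧸ (⊤ : Subgroup G)) ⊕ (G ⧸ (⊤ : Subgroup G)))

variable {G : Type*} [Group G]

abbrev BrauerRHS (r s : G) :=
  (G ⧸ Subgroup.zpowers r) ⊕ ((G ⧸ Subgroup.zpowers s) ⊕ (G ⧸ Subgroup.zpowers s))

variable (r s : G)

open QuotientGroup Sum

noncomputable def brauerVector : BrauerRHS r s →₀ ℚ :=
  single (inl ↑(1 : G) : BrauerRHS r s) 1 + single (inr (inl ↑(1 : G)) : BrauerRHS r s) 1 +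
    single (inr (inr ↑r) : BrauerRHS r s) 1 - single (inr (inr ↑r⁻¹) : BrauerRHS r s) 1

theorem smul_brauerVector (g : G) :
    g • brauerVector r s =
      single (inl ↑g : BrauerRHS r s) 1 + single (inr (inl ↑g) : BrauerRHS r s) 1 +
        single (inr (inr ↑(g * r)) : BrauerRHS r s) 1 -
        single (inr (inr ↑(g * r⁻¹)) : BrauerRHS r s) 1 := by
  simp [brauerVector, smul_sub]

variable [Fintype G]

open scoped Classical

noncomputable def brauerMap : (BrauerLHS G →₀ ℚ) →ₗ[ℚ] (BrauerRHS r s →₀ ℚ) :=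
  linearCombination ℚ <| Sum.elim (fun x => quotientBot x • brauerVector r s) <|
    Sum.elim (fun _ => ∑ d, single (inl d) 1) (fun _ => ∑ c, single (inr (inr c)) 1)

theorem brauerMap_smul (g : G) (v : BrauerLHS G →₀ ℚ) :
    brauerMap r s (g • v) = g • brauerMap r s v := by
  refine linearCombination_comapSMul ?_ g v
  rintro g (x | t | t)
  · induction x using QuotientGroup.induction_on with
    | H h => exact mul_smul g h (brauerVector r s)
  · exact (comapSMul_sum_single_comp _ (fun _ _ => rfl) g 1).symm
  · exact (comapSMul_sum_single_comp _ (fun _ _ => rfl) g 1).symm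

theorem brauerMap_apply (v : BrauerLHS G →₀ ℚ) :
    brauerMap r s v = ∑ g : G, v (inl ↑g) • g • brauerVector r s +
      v (inr (inl ↑(1 : G))) • ∑ d, single (inl d) 1 +
      v (inr (inr ↑(1 : G))) • ∑ c, single (inr (inr c)) 1 := by
  have := QuotientGroup.subsingleton_quotient_top (G := G)
  rw [brauerMap, linearCombination_apply, sum_fintype _ _ (by simp), Fintype.sum_sum_type,
    Fintype.sum_sum_type, ← quotientBot.symm.toEquiv.sum_comp,
    Fintype.sum_subsingleton (fun t => v (inr (inl t)) • _) ↑(1 : G),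
    Fintype.sum_subsingleton (fun t => v (inr (inr t)) • _) ↑(1 : G), add_assoc]
  rfl

theorem brauerMap_apply_inl (v : BrauerLHS G →₀ ℚ) (x : G) :
    brauerMap r s v (inl ↑x) =
      ∑ i ∈ range (orderOf r), v (inl ↑(x * r ^ i)) + v (inr (inl ↑(1 : G))) := by
  rw [← sum_filter_mk_eq_zpowers r x (fun g => v (inl ↑g)), sum_filter]
  simp [brauerMap_apply, smul_brauerVector, single_apply]

theorem brauerMap_apply_inr_inl (v : BrauerLHS G →₀ ℚ) (x : G) :
    brauerMap r s v (inr (inl ↑x)) = ∑ i ∈ range (orderOf s), v (inl ↑(x * s ^ i)) := by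
  rw [← sum_filter_mk_eq_zpowers s x (fun g => v (inl ↑g)), sum_filter]
  simp [brauerMap_apply, smul_brauerVector, single_apply]

theorem brauerMap_apply_inr_inr (v : BrauerLHS G →₀ ℚ) (x : G) :
    brauerMap r s v (inr (inr ↑x)) =
      ∑ i ∈ range (orderOf s), (v (inl ↑(x * s ^ i * r⁻¹)) - v (inl ↑(x * s ^ i * r))) +
        v (inr (inr ↑(1 : G))) := by
  have hshift (a : G) :
      ∑ g : G, (if (g : G ⧸ Subgroup.zpowers s) = x then v (inl ↑(g * a)) else 0) =
        ∑ g : G, if (g * a⁻¹ : G ⧸ Subgroup.zpowers s) = x then v (inl ↑g) else 0 :=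
    Fintype.sum_equiv (Equiv.mulRight a) _ _ (fun g => by simp)
  rw [sum_sub_distrib, ← sum_filter_mk_eq_zpowers s x (fun g => v (inl ↑(g * r⁻¹))),
    ← sum_filter_mk_eq_zpowers s x (fun g => v (inl ↑(g * r))), sum_filter, sum_filter, hshift,
    hshift]
  simp [brauerMap_apply, smul_brauerVector, single_apply, mul_sub, mul_ite]

variable {r s}

theorem brauerMap_injective (hs : orderOf s = 2) (hsr : s * r * s = r⁻¹) (hr : Odd (orderOf r)) :
    Function.Injective (brauerMap r s) := by
  refine (injective_iff_map_eq_zero _).mpr fun v hv => ?_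
  obtain ⟨hF, hμ, hν⟩ := eq_zero_of_brauer_equations (F := fun g => v (inl ↑g)) hs hsr hr
    (fun x => by simpa [hv] using (brauerMap_apply_inl r s v x).symm)
    (fun x => by simpa [hv] using (brauerMap_apply_inr_inl r s v x).symm)
    (fun x => by simpa [hv] using (brauerMap_apply_inr_inr r s v x).symm)
  have := QuotientGroup.subsingleton_quotient_top (G := G)
  ext (x | t | t)
  · induction x using QuotientGroup.induction_on with
    | H g => exact congrFun hF g
  · rwa [Subsingleton.elim t ↑(1 : G)]
  · rwa [Subsingleton.elim t ↑(1 : G)]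

theorem card_brauerLHS_eq_card_brauerRHS (hs : orderOf s = 2) (hG : Nat.card G = 2 * orderOf r) :
    Nat.card (BrauerLHS G) = Nat.card (BrauerRHS r s) := by
  have hrI := (Subgroup.zpowers r).index_mul_card
  have hsI := (Subgroup.zpowers s).index_mul_card
  simp only [Nat.card_sum, ← Subgroup.index_eq_card, Subgroup.index_bot, Subgroup.index_top,
    Nat.card_zpowers, hs, hG] at hrI hsI ⊢
  have : (Subgroup.zpowers r).index = 2 := Nat.eq_of_mul_eq_mul_right (orderOf_pos r) hrI
  omega

theorem brauerMap_bijective (hs : orderOf s = 2) (hsr : s * r * s = r⁻¹) (hr : Odd (orderOf r))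
    (hG : Nat.card G = 2 * orderOf r) : Function.Bijective (brauerMap r s) := by
  have hrank : Module.finrank ℚ (BrauerLHS G →₀ ℚ) = Module.finrank ℚ (BrauerRHS r s →₀ ℚ) := by
    simp only [Module.finrank_finsupp_self, ← Nat.card_eq_fintype_card,
      card_brauerLHS_eq_card_brauerRHS hs hG]
  have hinj := brauerMap_injective hs hsr hr
  exact ⟨hinj, (LinearMap.injective_iff_surjective_of_finrank_eq_finrank hrank).mp hinj⟩

end BrauerRelation

open DihedralGroup

theorem dihedral_brauer_relation_odd_general (n : ℕ) (hodd : Odd n) :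
    ∃ e : ((DihedralGroup n ⧸ (⊥ : Subgroup (DihedralGroup n))) ⊕
            ((DihedralGroup n ⧸ (⊤ : Subgroup (DihedralGroup n))) ⊕
             (DihedralGroup n ⧸ (⊤ : Subgroup (DihedralGroup n)))) →₀ ℚ) ≃ₗ[ℚ]
          ((DihedralGroup n ⧸ Subgroup.zpowers (r 1 : DihedralGroup n)) ⊕
            ((DihedralGroup n ⧸ Subgroup.zpowers (sr 0 : DihedralGroup n)) ⊕
             (DihedralGroup n ⧸ Subgroup.zpowers (sr 0 : DihedralGroup n))) →₀ ℚ),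
      ∀ (g : DihedralGroup n) (v),
        e (Finsupp.lmapDomain ℚ ℚ (fun x => g • x) v) =
          Finsupp.lmapDomain ℚ ℚ (fun x => g • x) (e v) := by
  have : NeZero n := ⟨hodd.pos.ne'⟩
  exact ⟨.ofBijective _ (brauerMap_bijective (orderOf_sr 0) (by simp) (by rwa [orderOf_r_one])
    (by rw [nat_card, orderOf_r_one])), brauerMap_smul _ _⟩

/-- For odd `n`, with `G = D_{2n}`, `C₂ = ⟨s⟩`, `Cₙ = ⟨r⟩`, the permutation
modules satisfy `ℚ[G/1] ⊕ ℚ[G/G]^{⊕2} ≅ ℚ[G/Cₙ] ⊕ ℚ[G/C₂]^{⊕2}` as `ℚ[G]`-modules, i.e.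
there is a `ℚ`-linear equivalence between the permutation modules on the disjoint unions of
coset spaces, commuting with the `G`-actions. -/
theorem dihedral_brauer_relation_odd (n : ℕ) (hn : 0 < n) (hodd : Odd n) :
    ∃ e : ((DihedralGroup n ⧸ (⊥ : Subgroup (DihedralGroup n))) ⊕
            ((DihedralGroup n ⧸ (⊤ : Subgroup (DihedralGroup n))) ⊕
             (DihedralGroup n ⧸ (⊤ : Subgroup (DihedralGroup n)))) →₀ ℚ) ≃ₗ[ℚ]
          ((DihedralGroup n ⧸ Subgroup.zpowers (r 1 : DihedralGroup n)) ⊕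
            ((DihedralGroup n ⧸ Subgroup.zpowers (sr 0 : DihedralGroup n)) ⊕
             (DihedralGroup n ⧸ Subgroup.zpowers (sr 0 : DihedralGroup n))) →₀ ℚ),
      ∀ (g : DihedralGroup n) (v),
        e (Finsupp.lmapDomain ℚ ℚ (fun x => g • x) v) =
          Finsupp.lmapDomain ℚ ℚ (fun x => g • x) (e v) :=
  dihedral_brauer_relation_odd_general n hodd
end

section
/- Let n be an even positive integer and D_{2n} = ⟨r, s | r^n = s^2 = 1, srs = r^{-1}⟩. Set C_2 = ⟨s⟩, C_n = ⟨r⟩, D_n = ⟨r^2, s⟩ and D_n' = ⟨r^2, sr⟩. Then there is an isomorphism of ℚ[D_{2n}]-modules ℚ[D_{2n}/1] ⊕ ℚ[D_{2n}/D_{2n}]^{⊕2} ⊕ ℚ[D_{2n}/D_n] ≅ ℚ[D_{2n}/C_n] ⊕ ℚ[D_{2n}/C_2]^{⊕2} ⊕ ℚ[D_{2n}/D_n']. -/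
/-!
On functions, `ℚ[G]` (`G = D_{2n}`) splits along the cosets `{r k, s r⁻ᵏ}` of `C₂` into the
permutation module of the vertices `ZMod n` (matched with one copy of `ℚ[G/C₂]`) and its twist
by the orientation character. The difference operator `v ↦ v(k + 1) - v(k - 1)` intertwines the
twisted vertex module with the untwisted one, and since `n` is even its kernel and cokernel are
both spanned by the characters `1` and `χ = (-1)^k`. The summands `ℚ²`, `ℚ[G/Dₙ]` on the left and
`ℚ[G/Cₙ]`, `ℚ[G/Dₙ']` on the right are sums of one-dimensional characters which fill this kernel
and cokernel equivariantly. The resulting explicit map is injective, as one sees by summing its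
coordinates against `1` and `χ`, hence bijective since both sides have dimension `2n + 4`.
-/

open DihedralGroup MulAction

lemma Finsupp.lmapDomain_smul_apply {G Z R M : Type*} [Group G] [MulAction G Z] [Semiring R]
    [AddCommMonoid M] [Module R M] (g : G) (w : Z →₀ M) (z : Z) :
    Finsupp.lmapDomain M R (g • ·) w z = w (g⁻¹ • z) :=
  Finsupp.mapDomain_equiv_apply (f := MulAction.toPerm g) w z

theorem exists_equivariant_finsuppEquiv_of_models {G X Y A B R : Type*} [Group G]
    [MulAction G X] [MulAction G Y] [Finite X] [Finite Y] [CommSemiring R]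
    (actA : G → A → A) (actB : G → B → B) (iX : X ≃ A) (iY : Y ≃ B)
    (hX : ∀ g x, iX (g • x) = actA g (iX x)) (hY : ∀ g y, iY (g • y) = actB g (iY y))
    (F : (A → R) ≃ₗ[R] (B → R)) (hF : ∀ g f, F (f ∘ actA g) = F f ∘ actB g) :
    ∃ e : (X →₀ R) ≃ₗ[R] (Y →₀ R), ∀ (g : G) (v : X →₀ R),
      e (Finsupp.lmapDomain R R (g • ·) v) = Finsupp.lmapDomain R R (g • ·) (e v) := by
  refine ⟨Finsupp.linearEquivFunOnFinite R R X ≪≫ₗ LinearEquiv.funCongrLeft R R iX.symm ≪≫ₗ F ≪≫ₗ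
    LinearEquiv.funCongrLeft R R iY ≪≫ₗ (Finsupp.linearEquivFunOnFinite R R Y).symm, ?_⟩
  intro g v
  have hpull : LinearEquiv.funCongrLeft R R iX.symm
      (Finsupp.linearEquivFunOnFinite R R X (Finsupp.lmapDomain R R (g • ·) v)) =
      LinearEquiv.funCongrLeft R R iX.symm (Finsupp.linearEquivFunOnFinite R R X v) ∘
        actA g⁻¹ := by
    funext a
    simp only [LinearEquiv.funCongrLeft_apply, LinearMap.funLeft_apply, Function.comp_apply,
      Finsupp.linearEquivFunOnFinite_apply, Finsupp.lmapDomain_smul_apply]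
    conv_rhs => rw [← iX.apply_symm_apply a, ← hX, iX.symm_apply_apply]
  ext y
  simp only [LinearEquiv.trans_apply, hpull, hF, Finsupp.linearEquivFunOnFinite_symm_apply,
    Finsupp.lmapDomain_smul_apply, LinearEquiv.funCongrLeft_apply, LinearMap.funLeft_apply,
    Function.comp_apply, hY]

section CosetModels

variable {G : Type*} [Group G]

noncomputable def quotientEquivOfKerEq {M : Type*} [Group M] (φ : G →* M)
    (hφ : Function.Surjective φ) {H : Subgroup G} (hH : φ.ker = H) : G ⧸ H ≃ M :=
  (Subgroup.quotientEquivOfEq hH.symm).trans (QuotientGroup.quotientKerEquivOfSurjective φ hφ)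

lemma quotientEquivOfKerEq_smul {M : Type*} [Group M] (φ : G →* M)
    (hφ : Function.Surjective φ) {H : Subgroup G} (hH : φ.ker = H) (g : G) (q : G ⧸ H) :
    quotientEquivOfKerEq φ hφ hH (g • q) = φ g * quotientEquivOfKerEq φ hφ hH q := by
  induction q using QuotientGroup.induction_on with
  | H a => exact map_mul φ g a

noncomputable def quotientEquivOfStabilizerEq {X : Type*} [MulAction G X]
    [IsPretransitive G X] (x : X) {H : Subgroup G} (hH : stabilizer G x = H) : G ⧸ H ≃ X :=
  (Subgroup.quotientEquivOfEq hH.symm).trans <| Equiv.ofBijective (ofQuotientStabilizer G x)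
    ⟨injective_ofQuotientStabilizer G x, fun y => (exists_smul_eq G x y).elim fun g hg => ⟨g, hg⟩⟩

lemma quotientEquivOfStabilizerEq_smul {X : Type*} [MulAction G X] [IsPretransitive G X]
    (x : X) {H : Subgroup G} (hH : stabilizer G x = H) (g : G) (q : G ⧸ H) :
    quotientEquivOfStabilizerEq x hH (g • q) = g • quotientEquivOfStabilizerEq x hH q := by
  induction q using QuotientGroup.induction_on with
  | H a => exact mul_smul g a x

end CosetModels

namespace Int

lemma surjective_of_map_eq_neg_one {G : Type*} [Group G] (φ : G →* ℤˣ) {g : G}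
    (hg : φ g = -1) : Function.Surjective φ := by
  intro u
  rcases units_eq_one_or u with rfl | rfl
  exacts [⟨1, map_one φ⟩, ⟨g, hg⟩]

lemma units_map_mul_sub_map_mul_neg {R : Type*} [CommRing R] (d : ℤˣ → R) (u : ℤˣ) :
    d (u * 1) - d (u * -1) = u * (d 1 - d (-1)) := by
  rcases units_eq_one_or u with rfl | rfl <;> simp

lemma units_map_mul_add_map_mul_neg {M : Type*} [AddCommMonoid M] (d : ℤˣ → M) (u : ℤˣ) :
    d (u * 1) + d (u * -1) = d 1 + d (-1) := by
  rcases units_eq_one_or u with rfl | rfl <;> simp [add_comm]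

lemma eq_zero_of_units_mul_add_eq_zero {K : Type*} [Field K] [CharZero K] {s t : K}
    (h : ∀ c : ℤˣ, (c : K) * s + t = 0) : s = 0 ∧ t = 0 := by
  have h₁ := h 1
  have h₂ := h (-1)
  push_cast at h₁ h₂
  have hs : (2 : K) * s = 0 := by linear_combination h₁ - h₂
  have ht : (2 : K) * t = 0 := by linear_combination h₁ + h₂
  exact ⟨by simpa using hs, by simpa using ht⟩

end Int

namespace ZMod

variable {n : ℕ}

section Sums

variable [NeZero n]

lemma apply_eq_apply_zero_of_add_one {α : Type*} {f : ZMod n → α} (hf : ∀ k, f (k + 1) = f k)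
    (k : ZMod n) : f k = f 0 := by
  rw [← natCast_zmod_val k]
  induction k.val with
  | zero => rw [Nat.cast_zero]
  | succ m ih => rw [Nat.cast_succ, hf, ih]

lemma sum_add_one_eq_sum {M : Type*} [AddCommMonoid M] (f : ZMod n → M) :
    ∑ k, f (k + 1) = ∑ k, f k :=
  Equiv.sum_comp (Equiv.addRight 1) f

lemma sum_sub_one_eq_sum {M : Type*} [AddCommMonoid M] (f : ZMod n → M) :
    ∑ k, f (k - 1) = ∑ k, f k :=
  Equiv.sum_comp (Equiv.subRight 1) f

lemma sum_shift_sub_shift {M : Type*} [AddCommGroup M] (v : ZMod n → M) :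
    ∑ k, (v (k + 1) - v (k - 1)) = 0 := by
  rw [Finset.sum_sub_distrib, sum_add_one_eq_sum, sum_sub_one_eq_sum, sub_self]

lemma eq_zero_of_add_one_of_sum_eq_zero {K : Type*} [Field K] [CharZero K] {f : ZMod n → K}
    (hf : ∀ k, f (k + 1) = f k) (hsum : ∑ k, f k = 0) (k : ZMod n) : f k = 0 := by
  simp only [apply_eq_apply_zero_of_add_one hf, Finset.sum_const, Finset.card_univ, card,
    nsmul_eq_mul, mul_eq_zero, Nat.cast_eq_zero, NeZero.ne n, false_or] at hsum
  rw [apply_eq_apply_zero_of_add_one hf, hsum]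

end Sums

def negOnePow (h2 : 2 ∣ n) (k : ZMod n) : ℤˣ := (-1) ^ castHom h2 (ZMod 2) k

variable (h2 : 2 ∣ n)

@[simp] lemma negOnePow_zero : negOnePow h2 0 = 1 := by simp [negOnePow]

@[simp] lemma negOnePow_one : negOnePow h2 1 = -1 := by rw [negOnePow, map_one, uzpow_one]

lemma negOnePow_add (j k : ZMod n) : negOnePow h2 (j + k) = negOnePow h2 j * negOnePow h2 k := by
  simp only [negOnePow, map_add, uzpow_add]

@[simp] lemma negOnePow_neg (k : ZMod n) : negOnePow h2 (-k) = negOnePow h2 k := by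
  simp only [negOnePow, map_neg, uzpow_neg, Int.units_inv_eq_self]

lemma negOnePow_sub (j k : ZMod n) : negOnePow h2 (j - k) = negOnePow h2 j * negOnePow h2 k := by
  rw [sub_eq_add_neg, negOnePow_add, negOnePow_neg]

@[simp] lemma negOnePow_two : negOnePow h2 2 = 1 := by
  rw [← one_add_one_eq_two, negOnePow_add, negOnePow_one, Int.units_mul_self]

variable [NeZero n]

lemma exists_eq_two_mul_of_negOnePow_eq_one {k : ZMod n} (hk : negOnePow h2 k = 1) :
    ∃ m : ℕ, k = 2 * m := by
  have hc : castHom h2 (ZMod 2) k = 0 := by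
    rw [negOnePow] at hk
    generalize castHom h2 (ZMod 2) k = c at hk
    match c with
    | 0 => rfl
    | 1 => simp at hk
  obtain ⟨m, hm⟩ : 2 ∣ k.val := by
    rwa [← natCast_eq_zero_iff, ← map_natCast (castHom h2 (ZMod 2)), natCast_zmod_val]
  exact ⟨m, by rw [← natCast_zmod_val k, hm]; push_cast; rfl⟩

lemma sum_negOnePow_mul_shift_sub_shift {R : Type*} [CommRing R] (v : ZMod n → R) :
    ∑ k, (negOnePow h2 k : R) * (v (k + 1) - v (k - 1)) = 0 := by
  have hnext := sum_add_one_eq_sum fun k => (negOnePow h2 (k - 1) : R) * v k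
  have hprev := sum_sub_one_eq_sum fun k => (negOnePow h2 (k + 1) : R) * v k
  simp only [add_sub_cancel_right, sub_add_cancel, negOnePow_sub, negOnePow_add,
    negOnePow_one] at hnext hprev
  simp only [mul_sub, Finset.sum_sub_distrib, hnext, hprev, sub_self]

variable {K : Type*} [Field K] [CharZero K]

lemma sum_negOnePow : ∑ k : ZMod n, (negOnePow h2 k : K) = 0 := by
  have hshift := sum_add_one_eq_sum fun k => (negOnePow h2 k : K)
  simp only [negOnePow_add, negOnePow_one, mul_neg, mul_one, Units.val_neg, Int.cast_neg,
    Finset.sum_neg_distrib, neg_eq_iff_add_eq_zero, ← two_mul, mul_eq_zero, two_ne_zero,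
    false_or] at hshift
  exact hshift

lemma eq_zero_of_add_one_eq_sub_one {v : ZMod n → K} (hv : ∀ k, v (k + 1) = v (k - 1))
    (hsum : ∑ k, v k = 0) (hsum' : ∑ k, (negOnePow h2 k : K) * v k = 0) (k : ZMod n) :
    v k = 0 := by
  have hv2 (k : ZMod n) : v (k + 1 + 1) = v k := by rw [hv, add_sub_cancel_right]
  have halt (k : ZMod n) : v (k + 1) = -v k := by
    have := eq_zero_of_add_one_of_sum_eq_zero (f := fun k => v k + v (k + 1))
      (fun k => by rw [hv2, add_comm])
      (by rw [Finset.sum_add_distrib, sum_add_one_eq_sum, hsum, add_zero]) k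
    exact eq_neg_of_add_eq_zero_right this
  have := eq_zero_of_add_one_of_sum_eq_zero (f := fun k => (negOnePow h2 k : K) * v k)
    (fun k => by simp only [halt, negOnePow_add, negOnePow_one]; push_cast; ring) hsum' k
  simpa using this

end ZMod

namespace DihedralGroup

variable {n : ℕ}

/-- `D_{2n}` acting on the vertices of the `n`-gon. -/
instance : MulAction (DihedralGroup n) (ZMod n) where
  smul
    | r j, k => j + k
    | sr j, k => -j - k
  one_smul := zero_add
  mul_smul := by
    rintro (i | i) (j | j) k <;>
      simp only [HSMul.hSMul, SMul.smul, r_mul_r, r_mul_sr, sr_mul_r, sr_mul_sr] <;> ring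

@[simp] lemma r_smul (j k : ZMod n) : r j • k = j + k := rfl

@[simp] lemma sr_smul (j k : ZMod n) : sr j • k = -j - k := rfl

instance : IsPretransitive (DihedralGroup n) (ZMod n) :=
  ⟨fun k l => ⟨r (l - k), by simp⟩⟩

lemma stabilizer_zero_eq_zpowers :
    stabilizer (DihedralGroup n) (0 : ZMod n) = Subgroup.zpowers (sr 0) := by
  refine le_antisymm (fun g hg => ?_) (Subgroup.zpowers_le.mpr (by simp))
  rcases g with j | j <;> simp only [mem_stabilizer_iff, r_smul, sr_smul] at hg
  · rw [add_zero] at hg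
    rw [hg, r_zero]
    exact Subgroup.one_mem _
  · obtain rfl : j = 0 := by simpa using hg
    exact Subgroup.mem_zpowers _

def orientation : DihedralGroup n →* ℤˣ where
  toFun
    | r _ => 1
    | sr _ => -1
  map_one' := rfl
  map_mul' := by rintro (i | i) (j | j) <;> simp [r_mul_r, r_mul_sr, sr_mul_r, sr_mul_sr]

@[simp] lemma orientation_r (i : ZMod n) : orientation (r i) = 1 := rfl

@[simp] lemma orientation_sr (i : ZMod n) : orientation (sr i) = -1 := rfl

lemma ker_orientation [NeZero n] : orientation.ker = Subgroup.zpowers (r 1 : DihedralGroup n) := by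
  refine le_antisymm (fun g hg => ?_) (Subgroup.zpowers_le.mpr rfl)
  rcases g with i | i
  · rw [← ZMod.natCast_zmod_val i, ← r_one_pow]
    exact pow_mem (Subgroup.mem_zpowers _) _
  · simp [MonoidHom.mem_ker] at hg

section Parity

variable (h2 : 2 ∣ n)

def parity : DihedralGroup n →* ℤˣ where
  toFun
    | r i => ZMod.negOnePow h2 i
    | sr i => ZMod.negOnePow h2 i
  map_one' := ZMod.negOnePow_zero h2
  map_mul' := by
    rintro (i | i) (j | j) <;>
      simp [r_mul_r, r_mul_sr, sr_mul_r, sr_mul_sr, ZMod.negOnePow_add, ZMod.negOnePow_sub,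
        mul_comm]

@[simp] lemma parity_r (i : ZMod n) : parity h2 (r i) = ZMod.negOnePow h2 i := rfl

@[simp] lemma parity_sr (i : ZMod n) : parity h2 (sr i) = ZMod.negOnePow h2 i := rfl

lemma negOnePow_smul (g : DihedralGroup n) (k : ZMod n) :
    ZMod.negOnePow h2 (g • k) = parity h2 g * ZMod.negOnePow h2 k := by
  rcases g with j | j <;> simp [ZMod.negOnePow_add, ZMod.negOnePow_sub]

variable [NeZero n]

lemma r_mem_closure_of_negOnePow_eq_one (x : DihedralGroup n) {i : ZMod n}
    (hi : ZMod.negOnePow h2 i = 1) : r i ∈ Subgroup.closure {r 2, x} := by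
  obtain ⟨m, rfl⟩ := ZMod.exists_eq_two_mul_of_negOnePow_eq_one h2 hi
  rw [← r_pow]
  exact pow_mem (Subgroup.subset_closure (by simp)) m

lemma ker_parity : (parity h2).ker = Subgroup.closure {r 2, sr 0} := by
  refine le_antisymm (fun g hg => ?_) ((Subgroup.closure_le _).mpr ?_)
  · rcases g with i | i
    · exact r_mem_closure_of_negOnePow_eq_one h2 _ hg
    · rw [← zero_add i, ← sr_mul_r]
      exact mul_mem (Subgroup.subset_closure (by simp))
        (r_mem_closure_of_negOnePow_eq_one h2 _ hg)
  · rintro g (rfl | rfl) <;> simp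

lemma ker_orientation_mul_parity :
    (orientation * parity h2).ker = Subgroup.closure {r 2, sr 1} := by
  refine le_antisymm (fun g hg => ?_) ((Subgroup.closure_le _).mpr ?_)
  · rcases g with i | i
    · simpa using r_mem_closure_of_negOnePow_eq_one h2 (sr 1) (by simpa using hg)
    · rw [← add_sub_cancel (1 : ZMod n) i, ← sr_mul_r]
      refine mul_mem (Subgroup.subset_closure (by simp))
        (r_mem_closure_of_negOnePow_eq_one h2 _ ?_)
      simp_all [ZMod.negOnePow_sub]
  · rintro g (rfl | rfl) <;> simp

end Parity

/-- `{r k, sr (-k)}` is the left coset of `⟨sr 0⟩` sent to the vertex `k`. -/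
def cosetSum : (DihedralGroup n → ℚ) →ₗ[ℚ] (ZMod n → ℚ) :=
  LinearMap.funLeft ℚ ℚ r + LinearMap.funLeft ℚ ℚ fun k => sr (-k)

def cosetAltSum : (DihedralGroup n → ℚ) →ₗ[ℚ] (ZMod n → ℚ) :=
  LinearMap.funLeft ℚ ℚ r - LinearMap.funLeft ℚ ℚ fun k => sr (-k)

@[simp] lemma cosetSum_apply (f : DihedralGroup n → ℚ) (k : ZMod n) :
    cosetSum f k = f (r k) + f (sr (-k)) := rfl

@[simp] lemma cosetAltSum_apply (f : DihedralGroup n → ℚ) (k : ZMod n) :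
    cosetAltSum f k = f (r k) - f (sr (-k)) := rfl

lemma cosetSum_comp_mul (f : DihedralGroup n → ℚ) (g : DihedralGroup n) (k : ZMod n) :
    cosetSum (fun h => f (g * h)) k = cosetSum f (g • k) := by
  rcases g with j | j <;>
    simp only [cosetSum_apply, r_mul_r, r_mul_sr, sr_mul_r, sr_mul_sr, r_smul, sr_smul] <;>
    ring_nf

lemma cosetAltSum_comp_mul (f : DihedralGroup n → ℚ) (g : DihedralGroup n) (k : ZMod n) :
    cosetAltSum (fun h => f (g * h)) k = orientation g * cosetAltSum f (g • k) := by
  rcases g with j | j <;>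
    simp only [cosetAltSum_apply, r_mul_r, r_mul_sr, sr_mul_r, sr_mul_sr, r_smul, sr_smul,
      orientation_r, orientation_sr] <;>
    push_cast <;> ring_nf

lemma eq_zero_of_cosetSum_of_cosetAltSum {f : DihedralGroup n → ℚ}
    (hs : ∀ k, cosetSum f k = 0) (ha : ∀ k, cosetAltSum f k = 0) (g : DihedralGroup n) :
    f g = 0 := by
  obtain ⟨k, rfl | rfl⟩ : ∃ k, g = r k ∨ g = sr (-k) := by
    rcases g with k | k
    exacts [⟨k, .inl rfl⟩, ⟨-k, .inr (by rw [neg_neg])⟩]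
  all_goals
    have := hs k
    have := ha k
    simp only [cosetSum_apply, cosetAltSum_apply] at *
    linarith

lemma orientation_mul_shift_sub_shift (v : ZMod n → ℚ) (g : DihedralGroup n) (k : ZMod n) :
    orientation g * (v (g • (k + 1)) - v (g • (k - 1))) = v (g • k + 1) - v (g • k - 1) := by
  rcases g with j | j <;> simp only [r_smul, sr_smul, orientation_r, orientation_sr] <;>
    push_cast <;> ring_nf

/-- Models of `G/1 ⊔ (G/G ⊔ G/G) ⊔ G/Dₙ`: the coset space `G/Dₙ` is `ℤˣ` via `parity`. -/
abbrev SourceModel (n : ℕ) := (DihedralGroup n ⊕ (Unit ⊕ Unit)) ⊕ ℤˣ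

/-- Models of `G/Cₙ ⊔ (G/C₂ ⊔ G/C₂) ⊔ G/Dₙ'`: `G/Cₙ` and `G/Dₙ'` are `ℤˣ` via `orientation` and
`orientation * parity`, and `G/C₂` is the set of vertices. -/
abbrev TargetModel (n : ℕ) := (ℤˣ ⊕ (ZMod n ⊕ ZMod n)) ⊕ ℤˣ

variable (h2 : 2 ∣ n)

def sourceAct (g : DihedralGroup n) : SourceModel n → SourceModel n :=
  Sum.map (Sum.map (g * ·) id) (parity h2 g * ·)

def targetAct (g : DihedralGroup n) : TargetModel n → TargetModel n :=
  Sum.map (Sum.map (orientation g * ·) (Sum.map (g • ·) (g • ·)))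
    (orientation g * parity h2 g * ·)

def regularPart : (SourceModel n → ℚ) →ₗ[ℚ] (DihedralGroup n → ℚ) :=
  LinearMap.funLeft ℚ ℚ (Sum.inl ∘ Sum.inl)

variable [NeZero n]

def brauerMap : (SourceModel n → ℚ) →ₗ[ℚ] (TargetModel n → ℚ) where
  toFun x
    | .inl (.inl c) => c * ∑ k, cosetAltSum (regularPart x) k + x (.inl (.inr (.inl ())))
    | .inl (.inr (.inl k)) =>
        cosetAltSum (regularPart x) (k + 1) - cosetAltSum (regularPart x) (k - 1) +
          x (.inl (.inr (.inr ()))) + ZMod.negOnePow h2 k * (x (.inr 1) - x (.inr (-1)))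
    | .inl (.inr (.inr k)) => cosetSum (regularPart x) k
    | .inr c => c * ∑ k, ZMod.negOnePow h2 k * cosetAltSum (regularPart x) k +
        (x (.inr 1) + x (.inr (-1)))
  map_add' x y := by
    ext ((c | k | k) | c) <;>
      simp only [map_add, Pi.add_apply, Finset.sum_add_distrib, mul_add] <;> ring
  map_smul' a x := by
    ext ((c | k | k) | c) <;>
      simp only [map_smul, Pi.smul_apply, smul_eq_mul, RingHom.id_apply, mul_left_comm _ a,
        ← Finset.mul_sum] <;> ring

lemma brauerMap_comp_sourceAct (g : DihedralGroup n) (x : SourceModel n → ℚ) :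
    brauerMap h2 (x ∘ sourceAct h2 g) = brauerMap h2 x ∘ targetAct h2 g := by
  have hreg : regularPart (x ∘ sourceAct h2 g) = fun h => regularPart x (g * h) := rfl
  have htriv (u : Unit ⊕ Unit) : sourceAct h2 g (.inl (.inr u)) = .inl (.inr u) := rfl
  have hquot (u : ℤˣ) : sourceAct h2 g (.inr u) = .inr (parity h2 g * u) := rfl
  have hsum (φ : ZMod n → ℚ) : ∑ k, φ (g • k) = ∑ k, φ k := Equiv.sum_comp (toPerm g) φ
  ext ((c | k | k) | c) <;>
    simp only [brauerMap, LinearMap.coe_mk, AddHom.coe_mk, Function.comp_apply, targetAct,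
      Sum.map_inl, Sum.map_inr, hreg, htriv, hquot, cosetAltSum_comp_mul, cosetSum_comp_mul]
  · rw [← Finset.mul_sum, hsum (cosetAltSum (regularPart x))]
    push_cast
    ring
  · rw [negOnePow_smul, ← orientation_mul_shift_sub_shift,
      Int.units_map_mul_sub_map_mul_neg (fun u => x (.inr u))]
    push_cast
    ring
  · have hχ (k : ZMod n) : ZMod.negOnePow h2 k = parity h2 g * ZMod.negOnePow h2 (g • k) := by
      rw [negOnePow_smul, ← mul_assoc, Int.units_mul_self, one_mul]
    have hweighted : ∑ k, (ZMod.negOnePow h2 k : ℚ) *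
          (orientation g * cosetAltSum (regularPart x) (g • k)) =
        orientation g * parity h2 g *
          ∑ k, (ZMod.negOnePow h2 k : ℚ) * cosetAltSum (regularPart x) k := by
      calc _ = ∑ k, orientation g * parity h2 g *
              ((ZMod.negOnePow h2 (g • k) : ℚ) * cosetAltSum (regularPart x) (g • k)) :=
            Finset.sum_congr rfl fun k _ => by rw [hχ k]; push_cast; ring
        _ = _ := by
          rw [← Finset.mul_sum]
          exact congrArg _
            (hsum fun k => (ZMod.negOnePow h2 k : ℚ) * cosetAltSum (regularPart x) k)
    rw [hweighted, Int.units_map_mul_add_map_mul_neg (fun u => x (.inr u))]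
    push_cast
    ring

lemma brauerMap_injective : Function.Injective (brauerMap h2) := by
  rw [← LinearMap.ker_eq_bot, LinearMap.ker_eq_bot']
  intro x hx
  have coord (z : TargetModel n) : brauerMap h2 x z = 0 := congrFun hx z
  set v := cosetAltSum (regularPart x)
  set a := x (.inl (.inr (.inl ())))
  set b := x (.inl (.inr (.inr ())))
  set d₁ := x (.inr 1)
  set d₂ := x (.inr (-1))
  have hCn (c : ℤˣ) : c * ∑ k, v k + a = 0 := coord (.inl (.inl c))
  have hC₂ (k : ZMod n) : v (k + 1) - v (k - 1) + b + ZMod.negOnePow h2 k * (d₁ - d₂) = 0 :=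
    coord (.inl (.inr (.inl k)))
  have hC₂' (k : ZMod n) : cosetSum (regularPart x) k = 0 := coord (.inl (.inr (.inr k)))
  have hDn' (c : ℤˣ) : c * ∑ k, ZMod.negOnePow h2 k * v k + (d₁ + d₂) = 0 := coord (.inr c)
  have hn : (n : ℚ) ≠ 0 := Nat.cast_ne_zero.mpr (NeZero.ne n)
  obtain ⟨hsum, ha⟩ := Int.eq_zero_of_units_mul_add_eq_zero hCn
  obtain ⟨hsum', hdsum⟩ := Int.eq_zero_of_units_mul_add_eq_zero hDn'
  have hb : b = 0 := by
    have := Finset.sum_eq_zero fun k (_ : k ∈ Finset.univ) => hC₂ k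
    rw [Finset.sum_add_distrib, Finset.sum_add_distrib, ZMod.sum_shift_sub_shift,
      ← Finset.sum_mul, ZMod.sum_negOnePow] at this
    simpa [hn] using this
  have hd : d₁ - d₂ = 0 := by
    have := Finset.sum_eq_zero fun k (_ : k ∈ Finset.univ) =>
      mul_eq_zero_of_right (ZMod.negOnePow h2 k : ℚ) (hC₂ k)
    simp only [mul_add, Finset.sum_add_distrib, ZMod.sum_negOnePow_mul_shift_sub_shift,
      ← Finset.sum_mul, ← mul_assoc, ← Int.cast_mul,
      Int.units_coe_mul_self, Int.cast_one, Finset.sum_const, Finset.card_univ, ZMod.card,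
      nsmul_eq_mul, mul_one, hb, mul_zero, zero_add] at this
    simpa [hn] using this
  have hv : ∀ k, v k = 0 := ZMod.eq_zero_of_add_one_eq_sub_one h2
    (fun k => by simpa [hb, hd, sub_eq_zero] using hC₂ k) hsum hsum'
  ext ((g | u | u) | c)
  · exact eq_zero_of_cosetSum_of_cosetAltSum hC₂' hv g
  · exact ha
  · exact hb
  · rcases Int.units_eq_one_or c with rfl | rfl <;> simp only [Pi.zero_apply] <;> linarith

noncomputable def brauerEquiv : (SourceModel n → ℚ) ≃ₗ[ℚ] (TargetModel n → ℚ) :=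
  (brauerMap h2).linearEquivOfInjective (brauerMap_injective h2) <| by
    simp only [Module.finrank_fintype_fun_eq_card, Fintype.card_sum, card, ZMod.card,
      Fintype.card_unit, Fintype.card_units_int]
    ring

noncomputable def sourceModelEquiv :
    ((DihedralGroup n ⧸ (⊥ : Subgroup (DihedralGroup n))) ⊕
      ((DihedralGroup n ⧸ (⊤ : Subgroup (DihedralGroup n))) ⊕
        (DihedralGroup n ⧸ (⊤ : Subgroup (DihedralGroup n))))) ⊕
      (DihedralGroup n ⧸ Subgroup.closure {(r 2 : DihedralGroup n), sr 0}) ≃ SourceModel n :=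
  let top := quotientEquivOfKerEq (1 : DihedralGroup n →* Unit) (fun _ => ⟨1, rfl⟩)
    MonoidHom.ker_one
  ((quotientEquivOfKerEq (MonoidHom.id _) Function.surjective_id MonoidHom.ker_id).sumCongr
      (top.sumCongr top)).sumCongr
    (quotientEquivOfKerEq (parity h2) (Int.surjective_of_map_eq_neg_one _ (g := r 1) (by simp))
      (ker_parity h2))

lemma sourceModelEquiv_smul (g : DihedralGroup n) (q) :
    sourceModelEquiv h2 (g • q) = sourceAct h2 g (sourceModelEquiv h2 q) := by
  rcases q with (q | q | q) | q <;>
    simp only [sourceModelEquiv, Sum.smul_inl, Sum.smul_inr, Equiv.sumCongr_apply, Sum.map_inl,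
      Sum.map_inr, quotientEquivOfKerEq_smul, sourceAct] <;> rfl

noncomputable def targetModelEquiv :
    ((DihedralGroup n ⧸ Subgroup.zpowers (r 1 : DihedralGroup n)) ⊕
      ((DihedralGroup n ⧸ Subgroup.zpowers (sr 0 : DihedralGroup n)) ⊕
        (DihedralGroup n ⧸ Subgroup.zpowers (sr 0 : DihedralGroup n)))) ⊕
      (DihedralGroup n ⧸ Subgroup.closure {(r 2 : DihedralGroup n), sr 1}) ≃ TargetModel n :=
  let vertices := quotientEquivOfStabilizerEq (0 : ZMod n) stabilizer_zero_eq_zpowers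
  ((quotientEquivOfKerEq orientation
      (Int.surjective_of_map_eq_neg_one _ (g := sr 0) rfl) ker_orientation).sumCongr
      (vertices.sumCongr vertices)).sumCongr
    (quotientEquivOfKerEq (orientation * parity h2)
      (Int.surjective_of_map_eq_neg_one _ (g := sr 0) (by simp)) (ker_orientation_mul_parity h2))

lemma targetModelEquiv_smul (g : DihedralGroup n) (q) :
    targetModelEquiv h2 (g • q) = targetAct h2 g (targetModelEquiv h2 q) := by
  rcases q with (q | q | q) | q <;>
    simp only [targetModelEquiv, Sum.smul_inl, Sum.smul_inr, Equiv.sumCongr_apply, Sum.map_inl,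
      Sum.map_inr, quotientEquivOfKerEq_smul, quotientEquivOfStabilizerEq_smul, targetAct,
      MonoidHom.mul_apply]

end DihedralGroup

/-- For even `n`, with `G = D_{2n}`, `C₂ = ⟨s⟩`, `Cₙ = ⟨r⟩`,
`Dₙ = ⟨r², s⟩`, `Dₙ' = ⟨r², sr⟩`, there is an isomorphism of `ℚ[G]`-modules
`ℚ[G/1] ⊕ ℚ[G/G]^{⊕2} ⊕ ℚ[G/Dₙ] ≅ ℚ[G/Cₙ] ⊕ ℚ[G/C₂]^{⊕2} ⊕ ℚ[G/Dₙ']`, i.e. a `ℚ`-linear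
equivalence of the permutation modules on the disjoint unions of cosets commuting with `G`. -/
theorem dihedral_brauer_relation_even (n : ℕ) (hn : 0 < n) (heven : Even n) :
    ∃ e : (((DihedralGroup n ⧸ (⊥ : Subgroup (DihedralGroup n))) ⊕
            ((DihedralGroup n ⧸ (⊤ : Subgroup (DihedralGroup n))) ⊕
             (DihedralGroup n ⧸ (⊤ : Subgroup (DihedralGroup n))))) ⊕
           (DihedralGroup n ⧸ Subgroup.closure {(r 2 : DihedralGroup n), sr 0}) →₀ ℚ) ≃ₗ[ℚ]
          (((DihedralGroup n ⧸ Subgroup.zpowers (r 1 : DihedralGroup n)) ⊕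
            ((DihedralGroup n ⧸ Subgroup.zpowers (sr 0 : DihedralGroup n)) ⊕
             (DihedralGroup n ⧸ Subgroup.zpowers (sr 0 : DihedralGroup n)))) ⊕
           (DihedralGroup n ⧸ Subgroup.closure {(r 2 : DihedralGroup n), sr 1}) →₀ ℚ),
      ∀ (g : DihedralGroup n) (v),
        e (Finsupp.lmapDomain ℚ ℚ (fun x => g • x) v) =
          Finsupp.lmapDomain ℚ ℚ (fun x => g • x) (e v) := by
  have : NeZero n := ⟨hn.ne'⟩
  have h2 : 2 ∣ n := heven.two_dvd
  exact exists_equivariant_finsuppEquiv_of_models (sourceAct h2) (targetAct h2)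
    (sourceModelEquiv h2) (targetModelEquiv h2) (sourceModelEquiv_smul h2)
    (targetModelEquiv_smul h2) (brauerEquiv h2) (brauerMap_comp_sourceAct h2)
end
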